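/- Let M and N be disjointly supported complementary subspaces of L^p(Ω). Then for every f ∈ L^p(Ω), P_M(f) is a subvector of f, i.e., P_M(f) = f·χ_A for some measurable set A (equivalently, f - P_M(f) and P_M(f) are disjointly supported). -/

import Mathlib

open MeasureTheory

/-! Write `f = m + n` with `m ∈ M`, `n ∈ N`, so that `P f = m`. Since `m n = 0` a.e., `m` agrees
with `f` where `n` vanishes and is zero elsewhere: `P f` is `f` restricted to the zero set of `n`. -/

theorem exists_measurableSet_ae_eq_indicator_of_mul_ae_eq_zero {α R : Type*} [MeasurableSpace α]
    {μ : Measure α} [NonUnitalNonAssocSemiring R] [NoZeroDivisors R] [MeasurableSpace R]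
    [MeasurableSingletonClass R] {f g h : α → R} (hf : f =ᵐ[μ] g + h) (hh : AEMeasurable h μ)
    (hgh : g * h =ᵐ[μ] 0) :
    ∃ A : Set α, MeasurableSet A ∧ g =ᵐ[μ] A.indicator f := by
  refine ⟨hh.mk h ⁻¹' {0}, hh.measurable_mk (measurableSet_singleton 0), ?_⟩
  filter_upwards [hf, hh.ae_eq_mk, hgh] with x hfx hhx hghx
  by_cases hx : hh.mk h x = 0
  · rw [Set.indicator_of_mem (show x ∈ _ from hx), hfx, Pi.add_apply, hhx, hx, add_zero]
  · rw [Set.indicator_of_notMem (show x ∉ _ from hx)]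
    exact (mul_eq_zero.mp hghx).resolve_right (hhx ▸ hx)

theorem stmt10 {α : Type*} [MeasurableSpace α] (μ : Measure α) (p : ℝ)
    (M N : Submodule ℂ (Lp ℂ (ENNReal.ofReal p) μ))
    (hdisj : ∀ f ∈ M, ∀ g ∈ N, (f : α → ℂ) * (g : α → ℂ) =ᵐ[μ] 0)
    (hsup : M ⊔ N = ⊤)
    (P : Lp ℂ (ENNReal.ofReal p) μ →ₗ[ℂ] Lp ℂ (ENNReal.ofReal p) μ)
    (hPM : ∀ f ∈ M, P f = f) (hPN : ∀ f ∈ N, P f = 0) :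
    ∀ f : Lp ℂ (ENNReal.ofReal p) μ,
      ∃ A : Set α, MeasurableSet A ∧ (P f : α → ℂ) =ᵐ[μ] A.indicator (f : α → ℂ) := by
  intro f
  obtain ⟨m, hm, n, hn, rfl⟩ := Submodule.mem_sup.mp (hsup ▸ Submodule.mem_top : f ∈ M ⊔ N)
  rw [map_add, hPM m hm, hPN n hn, add_zero]
  exact exists_measurableSet_ae_eq_indicator_of_mul_ae_eq_zero (Lp.coeFn_add m n)
    (Lp.aestronglyMeasurable n).aemeasurable (hdisj m hm n hn)
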